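/- arXiv:1508.05510 — 3 statements merged into one kernel-verified Lean document; each statement's English description precedes it below -/
import Mathlib

section
/- Let f : B_1 → ℝ be Lipschitz on the unit disk in ℝ² and let 0 < γ₀ < 1. Then ∫_{B_1} |z|^{γ₀−1} |f(z)|² dz ≤ C ∫_{B_1} |Df|² + C ∫_{∂B_1} |f|², where C depends only on γ₀. -/
/-!
Along a ray, the fundamental theorem of calculus for Lipschitz functions and Cauchy–Schwarz give
`f(rz)² ≤ 2 f(z)² + 2 ∫_r^1 |Df(tz)|² dt` for `|z| = 1`. In polar coordinates the weight becomes
`r · r^(γ₀-1) = r^γ₀ ≤ 1`, and integrating in `r` with the order of integration swapped,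
`∫_0^1 ∫_r^1 h(t) dt dr = ∫_0^1 t h(t) dt`, turns the ray integrals back into `∫_{B_1} |Df|²`.
So `C = 2` works. The ray argument needs `f` differentiable at almost every point of almost every
ray, which follows from Rademacher's theorem in polar coordinates.
-/

open MeasureTheory Real Set ENNReal

theorem sq_lintegral_le_measure_univ_mul_lintegral_sq {α : Type*} [MeasurableSpace α]
    {μ : Measure α} {f : α → ℝ≥0∞} (hf : AEMeasurable f μ) :
    (∫⁻ x, f x ∂μ) ^ 2 ≤ μ univ * ∫⁻ x, f x ^ 2 ∂μ := by
  have h := ENNReal.lintegral_mul_norm_pow_le (hf.pow_const 2) aemeasurable_const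
    (by norm_num : (0 : ℝ) ≤ 2⁻¹) (by norm_num : (0 : ℝ) ≤ 2⁻¹) (by norm_num) (μ := μ)
    (g := fun _ => 1)
  have hsqrt : ∀ a : ℝ≥0∞, (a ^ 2) ^ (2⁻¹ : ℝ) = a := fun a => by
    rw [← ENNReal.rpow_natCast, ← ENNReal.rpow_mul]; norm_num
  simp only [hsqrt, ENNReal.one_rpow, mul_one, lintegral_const, one_mul] at h
  calc (∫⁻ x, f x ∂μ) ^ 2 ≤ ((∫⁻ x, f x ^ 2 ∂μ) ^ (2⁻¹ : ℝ) * μ univ ^ (2⁻¹ : ℝ)) ^ 2 := by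
        gcongr
    _ = μ univ * ∫⁻ x, f x ^ 2 ∂μ := by
        rw [mul_pow, ← ENNReal.rpow_natCast, ← ENNReal.rpow_natCast (_ ^ _), ← ENNReal.rpow_mul,
          ← ENNReal.rpow_mul]
        norm_num [mul_comm]

theorem lintegral_Ioo_lintegral_Ioo_eq {a b : ℝ} {h : ℝ → ℝ≥0∞} (hh : Measurable h) :
    ∫⁻ r in Ioo a b, ∫⁻ t in Ioo r b, h t = ∫⁻ t in Ioo a b, ENNReal.ofReal (t - a) * h t := by
  have hmeas : Measurable fun p : ℝ × ℝ => (Ioi p.1).indicator h p.2 :=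
    (hh.comp measurable_snd).indicator (measurableSet_lt measurable_fst measurable_snd)
  calc ∫⁻ r in Ioo a b, ∫⁻ t in Ioo r b, h t
      = ∫⁻ r in Ioo a b, ∫⁻ t in Ioo a b, (Ioi r).indicator h t := by
        refine setLIntegral_congr_fun measurableSet_Ioo fun r hr => ?_
        rw [lintegral_indicator measurableSet_Ioi, Measure.restrict_restrict measurableSet_Ioi,
          Ioi_inter_Ioo, max_eq_left hr.1.le]
    _ = ∫⁻ t in Ioo a b, ∫⁻ r in Ioo a b, (Iio t).indicator (fun _ => h t) r :=
        lintegral_lintegral_swap hmeas.aemeasurable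
    _ = ∫⁻ t in Ioo a b, ENNReal.ofReal (t - a) * h t := by
        refine setLIntegral_congr_fun measurableSet_Ioo fun t ht => ?_
        rw [lintegral_indicator_const measurableSet_Iio, Measure.restrict_apply measurableSet_Iio,
          Iio_inter_Ioo, min_eq_left ht.2.le, Real.volume_Ioo, mul_comm]

theorem LipschitzWith.sq_sub_le_mul_lintegral_deriv_sq {g : ℝ → ℝ} {K : NNReal}
    (hg : LipschitzWith K g) {a b : ℝ} (hab : a ≤ b) :
    ENNReal.ofReal ((g b - g a) ^ 2) ≤
      ENNReal.ofReal (b - a) * ∫⁻ t in Ioo a b, ‖deriv g t‖ₑ ^ 2 := by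
  have hftc : g b - g a = ∫ t in Ioo a b, deriv g t := by
    rw [← integral_Ioc_eq_integral_Ioo, ← intervalIntegral.integral_of_le hab,
      (hg.lipschitzOnWith (s := uIcc a b)).absolutelyContinuousOnInterval.integral_deriv_eq_sub]
  calc ENNReal.ofReal ((g b - g a) ^ 2) = ‖g b - g a‖ₑ ^ 2 := by
        rw [Real.enorm_eq_ofReal_abs, ← ENNReal.ofReal_pow (abs_nonneg _), sq_abs]
    _ ≤ (∫⁻ t in Ioo a b, ‖deriv g t‖ₑ) ^ 2 := by
        rw [hftc]; gcongr; exact enorm_integral_le_lintegral_enorm _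
    _ ≤ ENNReal.ofReal (b - a) * ∫⁻ t in Ioo a b, ‖deriv g t‖ₑ ^ 2 := by
        rw [← Real.volume_Ioo, ← Measure.restrict_apply_univ]
        exact sq_lintegral_le_measure_univ_mul_lintegral_sq
          (measurable_deriv g).enorm.aemeasurable

theorem LipschitzWith.lintegral_Ioo_sq_le {g : ℝ → ℝ} {K : NNReal} (hg : LipschitzWith K g) :
    ∫⁻ r in Ioo 0 1, ENNReal.ofReal (g r ^ 2) ≤
      2 * ENNReal.ofReal (g 1 ^ 2) + 2 * ∫⁻ t in Ioo 0 1, ENNReal.ofReal t * ‖deriv g t‖ₑ ^ 2 := by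
  have pointwise : ∀ r ∈ Ioo (0 : ℝ) 1, ENNReal.ofReal (g r ^ 2) ≤
      2 * ENNReal.ofReal (g 1 ^ 2) + 2 * ∫⁻ t in Ioo r 1, ‖deriv g t‖ₑ ^ 2 := by
    intro r hr
    calc ENNReal.ofReal (g r ^ 2) ≤ ENNReal.ofReal (2 * g 1 ^ 2 + 2 * (g 1 - g r) ^ 2) :=
          ENNReal.ofReal_le_ofReal (by nlinarith [sq_nonneg (2 * g 1 - g r)])
      _ = 2 * ENNReal.ofReal (g 1 ^ 2) + 2 * ENNReal.ofReal ((g 1 - g r) ^ 2) := by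
          rw [ENNReal.ofReal_add (by positivity) (by positivity), ENNReal.ofReal_mul zero_le_two,
            ENNReal.ofReal_mul zero_le_two, ENNReal.ofReal_ofNat]
      _ ≤ 2 * ENNReal.ofReal (g 1 ^ 2) +
            2 * (ENNReal.ofReal (1 - r) * ∫⁻ t in Ioo r 1, ‖deriv g t‖ₑ ^ 2) := by
          gcongr; exact hg.sq_sub_le_mul_lintegral_deriv_sq hr.2.le
      _ ≤ 2 * ENNReal.ofReal (g 1 ^ 2) + 2 * ∫⁻ t in Ioo r 1, ‖deriv g t‖ₑ ^ 2 := by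
          gcongr
          exact mul_le_of_le_one_left' (ENNReal.ofReal_le_one.2 (by linarith [hr.1]))
  calc ∫⁻ r in Ioo 0 1, ENNReal.ofReal (g r ^ 2)
      ≤ ∫⁻ r in Ioo 0 1,
          (2 * ENNReal.ofReal (g 1 ^ 2) + 2 * ∫⁻ t in Ioo r 1, ‖deriv g t‖ₑ ^ 2) :=
        setLIntegral_mono' measurableSet_Ioo pointwise
    _ = 2 * ENNReal.ofReal (g 1 ^ 2) +
          2 * ∫⁻ r in Ioo 0 1, ∫⁻ t in Ioo r 1, ‖deriv g t‖ₑ ^ 2 := by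
        rw [lintegral_add_left measurable_const, setLIntegral_const, Real.volume_Ioo,
          lintegral_const_mul' _ _ ENNReal.ofNat_ne_top]
        norm_num
    _ = 2 * ENNReal.ofReal (g 1 ^ 2) +
          2 * ∫⁻ t in Ioo 0 1, ENNReal.ofReal t * ‖deriv g t‖ₑ ^ 2 := by
        rw [lintegral_Ioo_lintegral_Ioo_eq ((measurable_deriv g).enorm.pow_const 2)]
        simp_rw [sub_zero]

section NormedSpace

variable {E F : Type*} [NormedAddCommGroup E] [NormedSpace ℝ E] [NormedAddCommGroup F]
  [NormedSpace ℝ F]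

theorem norm_deriv_comp_smul_le {f : E → F} {z : E} {t : ℝ}
    (hf : DifferentiableAt ℝ f (t • z)) :
    ‖deriv (fun s : ℝ => f (s • z)) t‖ ≤ ‖fderiv ℝ f (t • z)‖ * ‖z‖ := by
  have hray : HasDerivAt (fun s : ℝ => s • z) z t := by
    simpa using (hasDerivAt_id t).smul_const z
  have hcomp : HasDerivAt (fun s : ℝ => f (s • z)) (fderiv ℝ f (t • z) z) t :=
    hf.hasFDerivAt.comp_hasDerivAt t hray
  rw [hcomp.deriv]
  exact (fderiv ℝ f (t • z)).le_opNorm z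

theorem LipschitzWith.lintegral_Ioo_sq_comp_smul_le {f : E → ℝ} {K : NNReal}
    (hf : LipschitzWith K f) {z : E} (hz : ‖z‖ = 1)
    (hdiff : ∀ᵐ t ∂volume.restrict (Ioo (0 : ℝ) 1), DifferentiableAt ℝ f (t • z)) :
    ∫⁻ r in Ioo (0 : ℝ) 1, ENNReal.ofReal (f (r • z) ^ 2) ≤
      2 * ENNReal.ofReal (f z ^ 2) +
        2 * ∫⁻ t in Ioo 0 1, ENNReal.ofReal t * ‖fderiv ℝ f (t • z)‖ₑ ^ 2 := by
  have hg : LipschitzWith _ fun s : ℝ => f (s • z) :=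
    hf.comp (ContinuousLinearMap.toSpanSingleton ℝ z).lipschitz
  refine (one_smul ℝ z ▸ hg.lintegral_Ioo_sq_le).trans ?_
  gcongr 2 * _ + 2 * ?_
  refine lintegral_mono_ae ?_
  filter_upwards [hdiff] with t ht
  gcongr
  rw [enorm_le_iff_norm_le]
  simpa [hz] using norm_deriv_comp_smul_le ht

theorem LipschitzWith.ofReal_setIntegral_norm_fderiv_sq [MeasurableSpace E]
    [OpensMeasurableSpace E] [CompleteSpace F] {μ : Measure E} {s : Set E} (hs : μ s ≠ ∞)
    {f : E → F} {K : NNReal} (hf : LipschitzWith K f) :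
    ENNReal.ofReal (∫ z in s, ‖fderiv ℝ f z‖ ^ 2 ∂μ) = ∫⁻ z in s, ‖fderiv ℝ f z‖ₑ ^ 2 ∂μ := by
  have hbound : ∀ z, ‖‖fderiv ℝ f z‖ ^ 2‖ ≤ (K : ℝ) ^ 2 := fun z => by
    rw [norm_pow, norm_norm]; gcongr; exact norm_fderiv_le_of_lipschitz ℝ hf
  rw [ofReal_integral_eq_lintegral_ofReal
    ((integrableOn_const hs).mono'
      ((measurable_fderiv ℝ f).norm.pow_const 2).aestronglyMeasurable (ae_of_all _ hbound))
    (ae_of_all _ fun _ => sq_nonneg _)]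
  simp_rw [ENNReal.ofReal_pow (norm_nonneg _), ofReal_norm]

end NormedSpace

namespace Complex

theorem polarCoord_symm_eq_smul_exp (p : ℝ × ℝ) :
    Complex.polarCoord.symm p = p.1 • exp (p.2 * I) := by
  rw [Complex.polarCoord_symm_apply, real_smul, exp_mul_I, ← ofReal_cos, ← ofReal_sin]

theorem lintegral_eq_lintegral_polar {g : ℂ → ℝ≥0∞} (hg : Measurable g) :
    ∫⁻ z, g z = ∫⁻ θ in Ioo (-π) π, ∫⁻ r in Ioi 0, ENNReal.ofReal r * g (r • exp (θ * I)) := by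
  have hpolar : Measurable fun p : ℝ × ℝ => ENNReal.ofReal p.1 * g (p.1 • exp (p.2 * I)) := by
    fun_prop
  rw [← Complex.lintegral_comp_polarCoord_symm, polarCoord_target, Measure.volume_eq_prod,
    ← Measure.prod_restrict, ← lintegral_prod_symm _ hpolar.aemeasurable]
  simp_rw [polarCoord_symm_eq_smul_exp, smul_eq_mul]

theorem setLIntegral_ball_eq_lintegral_polar {g : ℂ → ℝ≥0∞} (hg : Measurable g) (R : ℝ) :
    ∫⁻ z in Metric.ball (0 : ℂ) R, g z =
      ∫⁻ θ in Ioo (-π) π, ∫⁻ r in Ioo 0 R, ENNReal.ofReal r * g (r • exp (θ * I)) := by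
  rw [← lintegral_indicator measurableSet_ball,
    lintegral_eq_lintegral_polar (hg.indicator measurableSet_ball)]
  refine lintegral_congr fun θ => ?_
  have hray : ∀ r ∈ Ioi (0 : ℝ),
      ENNReal.ofReal r * (Metric.ball 0 R).indicator g (r • exp (θ * I)) =
        (Iio R).indicator (fun r => ENNReal.ofReal r * g (r • exp (θ * I))) r := by
    intro r hr
    have hmem : r • exp (θ * I) ∈ Metric.ball 0 R ↔ r ∈ Iio R := by
      rw [mem_ball_zero_iff, norm_smul, norm_exp_ofReal_mul_I, mul_one,
        Real.norm_of_nonneg hr.le, mem_Iio]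
    by_cases h : r ∈ Iio R
    · rw [indicator_of_mem (hmem.2 h), indicator_of_mem h]
    · rw [indicator_of_notMem (mt hmem.1 h), indicator_of_notMem h, mul_zero]
  rw [setLIntegral_congr_fun measurableSet_Ioi hray, lintegral_indicator measurableSet_Iio,
    Measure.restrict_restrict measurableSet_Iio, Iio_inter_Ioi]

theorem ae_ae_smul_exp_of_ae {p : ℂ → Prop} (hp : ∀ᵐ z, p z) :
    ∀ᵐ (θ : ℝ) ∂volume.restrict (Ioo (-π) π), ∀ᵐ (r : ℝ) ∂volume.restrict (Ioi 0),
      p (r • exp (θ * I)) := by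
  set N := toMeasurable (volume : Measure ℂ) {z | ¬ p z}
  have hN : MeasurableSet N := measurableSet_toMeasurable _ _
  have hray : Measurable fun q : ℝ × ℝ =>
      ENNReal.ofReal q.2 * N.indicator 1 (q.2 • exp (q.1 * I)) := by
    fun_prop
  have hzero : ∫⁻ θ in Ioo (-π) π, ∫⁻ r in Ioi 0,
      ENNReal.ofReal r * N.indicator 1 (r • exp (θ * I)) = 0 := by
    rw [← lintegral_eq_lintegral_polar (measurable_one.indicator hN), lintegral_indicator_one hN,
      measure_toMeasurable]
    exact ae_iff.1 hp
  filter_upwards [(lintegral_eq_zero_iff hray.lintegral_prod_right').1 hzero] with θ hθ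
  filter_upwards [(lintegral_eq_zero_iff (hray.comp measurable_prodMk_left)).1 hθ,
    ae_restrict_mem measurableSet_Ioi] with r hr hr0
  have : r • exp (θ * I) ∉ N := by
    simpa [(ENNReal.ofReal_pos.2 hr0).ne', indicator_apply_eq_zero] using hr
  exact not_not.1 fun h => this (subset_toMeasurable _ _ h)

theorem ofReal_intervalIntegral_comp_exp_mul_I {h : ℂ → ℝ} (hh : Continuous h)
    (hnn : ∀ z, 0 ≤ h z) :
    ENNReal.ofReal (∫ θ in (0 : ℝ)..(2 * π), h (exp (θ * I))) =
      ∫⁻ θ in Ioo (-π) π, ENNReal.ofReal (h (exp (θ * I))) := by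
  have hper : Function.Periodic (fun θ : ℝ => h (exp (θ * I))) (2 * π) := fun θ => by
    simp only [ofReal_add, ofReal_mul, ofReal_ofNat, exp_mul_I_periodic (θ : ℂ)]
  have hcont : Continuous fun θ : ℝ => h (exp (θ * I)) := by fun_prop
  rw [← zero_add (2 * π), hper.intervalIntegral_add_eq 0 (-π), neg_add_eq_sub,
    show 2 * π - π = π by ring, intervalIntegral.integral_of_le (by linarith [pi_pos]),
    integral_Ioc_eq_integral_Ioo, ofReal_integral_eq_lintegral_ofReal
      (hcont.integrableOn_Icc.mono_set Ioo_subset_Icc_self) (ae_of_all _ fun _ => hnn _)]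

end Complex

open Complex in
theorem LipschitzWith.setLIntegral_ball_rpow_mul_sq_le {γ : ℝ} (hγ : 0 ≤ γ) {f : ℂ → ℝ}
    {K : NNReal} (hf : LipschitzWith K f) :
    ∫⁻ z in Metric.ball (0 : ℂ) 1, ENNReal.ofReal (‖z‖ ^ (γ - 1) * f z ^ 2) ≤
      2 * (∫⁻ z in Metric.ball (0 : ℂ) 1, ‖fderiv ℝ f z‖ₑ ^ 2) +
        2 * ∫⁻ θ in Ioo (-π) π, ENNReal.ofReal (f (exp (θ * I)) ^ 2) := by
  have hdiff : ∀ᵐ (θ : ℝ) ∂volume.restrict (Ioo (-π) π),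
      ∀ᵐ (t : ℝ) ∂volume.restrict (Ioo 0 1), DifferentiableAt ℝ f (t • exp (θ * I)) :=
    (ae_ae_smul_exp_of_ae hf.ae_differentiableAt).mono fun _ h =>
      ae_restrict_of_ae_restrict_of_subset Ioo_subset_Ioi_self h
  have hweight : ∀ (θ : ℝ), ∀ r ∈ Ioo (0 : ℝ) 1,
      ENNReal.ofReal r * ENNReal.ofReal (‖r • exp (θ * I)‖ ^ (γ - 1) * f (r • exp (θ * I)) ^ 2)
        ≤ ENNReal.ofReal (f (r • exp (θ * I)) ^ 2) := by
    intro θ r hr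
    have hpow : r * r ^ (γ - 1) = r ^ γ := by
      rw [mul_comm, ← Real.rpow_add_one hr.1.ne', sub_add_cancel]
    rw [← ENNReal.ofReal_mul hr.1.le, norm_smul, norm_exp_ofReal_mul_I, mul_one,
      Real.norm_of_nonneg hr.1.le, ← mul_assoc, hpow]
    exact ENNReal.ofReal_le_ofReal
      (mul_le_of_le_one_left (sq_nonneg _) (Real.rpow_le_one hr.1.le hr.2.le hγ))
  have hfm := hf.continuous.measurable
  rw [setLIntegral_ball_eq_lintegral_polar (by fun_prop) 1,
    setLIntegral_ball_eq_lintegral_polar (by fun_prop) 1]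
  calc _ ≤ ∫⁻ θ in Ioo (-π) π, (2 * ENNReal.ofReal (f (exp (θ * I)) ^ 2) +
        2 * ∫⁻ t in Ioo 0 1, ENNReal.ofReal t * ‖fderiv ℝ f (t • exp (θ * I))‖ₑ ^ 2) := by
        refine lintegral_mono_ae ?_
        filter_upwards [hdiff] with θ hθ
        exact (setLIntegral_mono' measurableSet_Ioo (hweight θ)).trans
          (hf.lintegral_Ioo_sq_comp_smul_le (norm_exp_ofReal_mul_I θ) hθ)
    _ = _ := by
        rw [lintegral_add_left (by fun_prop), lintegral_const_mul' _ _ ENNReal.ofNat_ne_top,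
          lintegral_const_mul' _ _ ENNReal.ofNat_ne_top, add_comm]

theorem stmt_0_general (γ₀ : ℝ) (hγ₀ : 0 < γ₀) :
    ∃ C : ℝ, 0 < C ∧
      ∀ (f : ℂ → ℝ) (K : NNReal), LipschitzWith K f →
        (∫ z in Metric.ball (0 : ℂ) 1, ‖z‖ ^ (γ₀ - 1) * (f z) ^ 2) ≤
          C * (∫ z in Metric.ball (0 : ℂ) 1, ‖fderiv ℝ f z‖ ^ 2) +
          C * (∫ θ in (0 : ℝ)..(2 * π), (f (Complex.exp (θ * Complex.I))) ^ 2) := by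
  refine ⟨2, two_pos, fun f K hf => ?_⟩
  have hfc := hf.continuous
  have hweight : Measurable fun z : ℂ => ‖z‖ ^ (γ₀ - 1) * f z ^ 2 := by fun_prop
  have hgrad₀ : 0 ≤ ∫ z in Metric.ball (0 : ℂ) 1, ‖fderiv ℝ f z‖ ^ 2 :=
    integral_nonneg fun _ => sq_nonneg _
  have hbdry₀ : 0 ≤ ∫ θ in (0 : ℝ)..(2 * π), f (Complex.exp (θ * Complex.I)) ^ 2 :=
    intervalIntegral.integral_nonneg two_pi_pos.le fun _ _ => sq_nonneg _
  rw [integral_eq_lintegral_of_nonneg_ae (ae_of_all _ fun z => by positivity)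
    hweight.aestronglyMeasurable]
  refine ENNReal.toReal_le_of_le_ofReal (by positivity) ?_
  rw [ENNReal.ofReal_add (by positivity) (by positivity), ENNReal.ofReal_mul zero_le_two,
    ENNReal.ofReal_mul zero_le_two, ENNReal.ofReal_ofNat,
    hf.ofReal_setIntegral_norm_fderiv_sq measure_ball_lt_top.ne,
    Complex.ofReal_intervalIntegral_comp_exp_mul_I (by fun_prop) fun _ => sq_nonneg _]
  exact hf.setLIntegral_ball_rpow_mul_sq_le hγ₀.le

/-- Weighted Poincaré inequality on the unit disk for Lipschitz functions:
`∫_{B_1} |z|^(γ₀-1) f² ≤ C ∫_{B_1} |Df|² + C ∫_{∂B_1} f²`, `C` depending only on `γ₀`. -/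
theorem stmt_0 (γ₀ : ℝ) (hγ₀ : 0 < γ₀) (hγ₁ : γ₀ < 1) :
    ∃ C : ℝ, 0 < C ∧
      ∀ (f : ℂ → ℝ) (K : NNReal), LipschitzWith K f →
        (∫ z in Metric.ball (0 : ℂ) 1, ‖z‖ ^ (γ₀ - 1) * (f z) ^ 2) ≤
          C * (∫ z in Metric.ball (0 : ℂ) 1, ‖fderiv ℝ f z‖ ^ 2) +
          C * (∫ θ in (0 : ℝ)..(2 * π), (f (Complex.exp (θ * Complex.I))) ^ 2) :=
  stmt_0_general γ₀ hγ₀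
end

section
/- Let D : (0,1) → (0,∞) be absolutely continuous and nondecreasing, let η > 0, and suppose (1/2) D(r) ≤ C·D(r)^{1+η/4} + C·r·D(r)^{η/4}·D'(r) + e(r) for all small r, where e ≥ 0 satisfies ∫_0^r e(t)/(t D(t)) dt ≤ C r^{η/2} and D(r) ≤ C r². Then D cannot be strictly positive on any interval (0, r₁); i.e., dividing by r D(r) and integrating the inequality log(r/s) ≤ C ∫_s^r (D(ρ)^{η/4}/ρ + D(ρ)^{η/4−1} D'(ρ) + e(ρ)/(ρD(ρ))) dρ ≤ C r^{η/2} leads to a contradiction as s → 0. -/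
/-!
Divided by `ρ D(ρ)`, and with `D ≤ C ρ²` to control `D^{1+α}`, the inequality reads
`1/(2ρ) ≤ C C^α ρ^{2α-1} + C D^{α-1} D' + e/(ρ D)` where `α = η/4`. Integrate over `[s, r]`.
The middle term is `(D^α)'/α` almost everywhere, and `D^α` is monotone, so by Lebesgue's
inequality `∫ g' ≤ g(r) - g(s)` for monotone `g` it contributes at most `C D(r)^α/α`, without
any absolute continuity of `D`. Hence `log(r/s)` stays bounded as `s → 0`, which is absurd.
-/

open MeasureTheory Real Set

section RpowDeriv

variable {D D' : ℝ → ℝ} {a b p : ℝ}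

lemma rpow_mul_deriv_ae_eq_deriv_rpow_div (hp : 0 < p) (hpos : ∀ x ∈ uIoc a b, 0 < D x)
    (hderiv : ∀ᵐ x ∂volume.restrict (uIoc a b), HasDerivAt D (D' x) x) :
    (fun x ↦ D x ^ (p - 1) * D' x) =ᵐ[volume.restrict (uIoc a b)]
      fun x ↦ deriv (fun y ↦ D y ^ p) x / p := by
  filter_upwards [hderiv, ae_restrict_mem measurableSet_uIoc] with x hx hmem
  rw [(hx.rpow_const (Or.inl (hpos x hmem).ne')).deriv]
  field_simp

lemma MonotoneOn.rpow_const {s : Set ℝ} (hmono : MonotoneOn D s) (hD : ∀ x ∈ s, 0 ≤ D x)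
    (hp : 0 ≤ p) : MonotoneOn (fun x ↦ D x ^ p) s :=
  fun _ hx _ hy hxy ↦ rpow_le_rpow (hD _ hx) (hmono hx hy hxy) hp

lemma intervalIntegrable_rpow_mul_deriv (hp : 0 < p) (hpos : ∀ x ∈ uIcc a b, 0 < D x)
    (hmono : MonotoneOn D (uIcc a b))
    (hderiv : ∀ᵐ x ∂volume.restrict (uIoc a b), HasDerivAt D (D' x) x) :
    IntervalIntegrable (fun x ↦ D x ^ (p - 1) * D' x) volume a b :=
  ((hmono.rpow_const (fun x hx ↦ (hpos x hx).le) hp.le).intervalIntegrable_deriv.div_const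
    p).congr_ae (rpow_mul_deriv_ae_eq_deriv_rpow_div hp
      (fun x hx ↦ hpos x (uIoc_subset_uIcc hx)) hderiv).symm

lemma integral_rpow_mul_deriv_le (hp : 0 < p) (hab : a ≤ b) (hpos : ∀ x ∈ Icc a b, 0 < D x)
    (hmono : MonotoneOn D (Icc a b))
    (hderiv : ∀ᵐ x ∂volume.restrict (Ioc a b), HasDerivAt D (D' x) x) :
    ∫ x in a..b, D x ^ (p - 1) * D' x ≤ (D b ^ p - D a ^ p) / p := by
  rw [← uIcc_of_le hab] at hpos hmono
  rw [← uIoc_of_le hab] at hderiv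
  rw [intervalIntegral.integral_congr_ae ((ae_restrict_iff' measurableSet_uIoc).mp
      (rpow_mul_deriv_ae_eq_deriv_rpow_div hp (fun x hx ↦ hpos x (uIoc_subset_uIcc hx)) hderiv)),
    intervalIntegral.integral_div]
  have hg := hmono.rpow_const (fun x hx ↦ (hpos x hx).le) hp.le
  have := hg.intervalIntegral_deriv_mem_uIcc
  rw [uIcc_of_le (sub_nonneg.mpr (hg (by simp) (by simp) hab))] at this
  gcongr
  exact this.2

end RpowDeriv

lemma inv_div_two_le_of_half_le {ρ d d' ε C α : ℝ} (hρ : 0 < ρ) (hd : 0 < d) (hC : 0 ≤ C)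
    (hα : 0 ≤ α) (hdC : d ≤ C * ρ ^ 2)
    (h : 1 / 2 * d ≤ C * d ^ (1 + α) + C * ρ * d ^ α * d' + ε) :
    ρ⁻¹ / 2 ≤ C * C ^ α * ρ ^ (2 * α - 1) + C * (d ^ (α - 1) * d') + ε / (ρ * d) := by
  have hdα : d ^ α ≤ C ^ α * ρ ^ (2 * α) := calc
    d ^ α ≤ (C * ρ ^ 2) ^ α := rpow_le_rpow hd.le hdC hα
    _ = C ^ α * ρ ^ (2 * α) := by
      rw [mul_rpow hC (sq_nonneg ρ), ← rpow_natCast, ← rpow_mul hρ.le]; norm_num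
  have h1α : d ^ (1 + α) = d * d ^ α := by rw [rpow_add hd, rpow_one]
  have hα1 : d ^ α = d * d ^ (α - 1) := by rw [rpow_sub_one hd.ne']; field_simp
  calc ρ⁻¹ / 2 = 1 / 2 * d / (ρ * d) := by field_simp
    _ ≤ (C * d ^ (1 + α) + C * ρ * d ^ α * d' + ε) / (ρ * d) := by gcongr
    _ = C * d ^ α / ρ + C * (d ^ (α - 1) * d') + ε / (ρ * d) := by
      rw [h1α, hα1]; field_simp
    _ ≤ C * (C ^ α * ρ ^ (2 * α)) / ρ + C * (d ^ (α - 1) * d') + ε / (ρ * d) := by gcongr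
    _ = C * C ^ α * ρ ^ (2 * α - 1) + C * (d ^ (α - 1) * d') + ε / (ρ * d) := by
      rw [rpow_sub_one hρ.ne']; ring

lemma not_forall_log_sub_log_le {r : ℝ} (hr : 0 < r) (K : ℝ) :
    ¬ ∀ s ∈ Ioc 0 r, log r - log s ≤ K := by
  intro h
  have hs : r * exp (-|K| - 1) ∈ Ioc 0 r :=
    ⟨by positivity, mul_le_of_le_one_right hr.le (exp_le_one_iff.mpr (by linarith [abs_nonneg K]))⟩
  have := h _ hs
  rw [log_mul hr.ne' (exp_ne_zero _), log_exp] at this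
  linarith [le_abs_self K]

lemma integral_rpow_sub_one_le {s r q : ℝ} (hs : 0 ≤ s) (hq : 0 < q) :
    ∫ ρ in s..r, ρ ^ (q - 1) ≤ r ^ q / q := by
  rw [integral_rpow (Or.inl (by linarith)), sub_add_cancel]
  gcongr
  linarith [rpow_nonneg hs q]

lemma intervalIntegral_le_integral_Ioo {f : ℝ → ℝ} {a s r : ℝ} (has : a ≤ s) (hsr : s ≤ r)
    (hf : IntegrableOn f (Ioo a r)) (hf0 : ∀ x ∈ Ioo a r, 0 ≤ f x) :
    ∫ x in s..r, f x ≤ ∫ x in Ioo a r, f x := by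
  rw [intervalIntegral.integral_of_le hsr, integral_Ioc_eq_integral_Ioo]
  refine setIntegral_mono_set hf ?_ (Ioo_subset_Ioo_left has).eventuallyLE
  filter_upwards [ae_restrict_mem measurableSet_Ioo] with x hx using hf0 x hx

lemma log_sub_log_le_integral_of_half_le {α C s r : ℝ} {D D' e : ℝ → ℝ} (hα : 0 < α) (hC : 0 ≤ C)
    (hs : 0 < s) (hsr : s ≤ r) (hDpos : ∀ ρ ∈ Icc s r, 0 < D ρ) (hmono : MonotoneOn D (Icc s r))
    (hderiv : ∀ᵐ ρ ∂volume.restrict (Ioc s r), HasDerivAt D (D' ρ) ρ)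
    (hmain : ∀ ρ ∈ Icc s r,
      1 / 2 * D ρ ≤ C * D ρ ^ (1 + α) + C * ρ * D ρ ^ α * D' ρ + e ρ)
    (hD2 : ∀ ρ ∈ Icc s r, D ρ ≤ C * ρ ^ 2)
    (herr : IntervalIntegrable (fun ρ ↦ e ρ / (ρ * D ρ)) volume s r) :
    log r - log s ≤ 2 * ((∫ ρ in s..r, C * C ^ α * ρ ^ (2 * α - 1)) +
      C * (∫ ρ in s..r, D ρ ^ (α - 1) * D' ρ) + ∫ ρ in s..r, e ρ / (ρ * D ρ)) := by
  have hinv : IntervalIntegrable (fun ρ ↦ ρ⁻¹ / 2) volume s r :=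
    (intervalIntegral.intervalIntegrable_inv
      (fun ρ hρ ↦ (hs.trans_le (uIcc_of_le hsr ▸ hρ).1).ne') continuousOn_id).div_const 2
  have hpow : IntervalIntegrable (fun ρ ↦ C * C ^ α * ρ ^ (2 * α - 1)) volume s r :=
    (intervalIntegral.intervalIntegrable_rpow' (by linarith)).const_mul _
  have hchain : IntervalIntegrable (fun ρ ↦ C * (D ρ ^ (α - 1) * D' ρ)) volume s r := by
    rw [← uIcc_of_le hsr] at hDpos hmono
    exact (intervalIntegrable_rpow_mul_deriv hα hDpos hmono (uIoc_of_le hsr ▸ hderiv)).const_mul C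
  calc log r - log s = 2 * ∫ ρ in s..r, ρ⁻¹ / 2 := by
        rw [intervalIntegral.integral_div, integral_inv_of_pos hs (hs.trans_le hsr),
          log_div (hs.trans_le hsr).ne' hs.ne']
        ring
    _ ≤ 2 * ∫ ρ in s..r,
          C * C ^ α * ρ ^ (2 * α - 1) + C * (D ρ ^ (α - 1) * D' ρ) + e ρ / (ρ * D ρ) := by
        gcongr
        refine intervalIntegral.integral_mono_on hsr hinv ((hpow.add hchain).add herr)
          fun ρ hρ ↦ ?_
        exact inv_div_two_le_of_half_le (hs.trans_le hρ.1) (hDpos ρ hρ) hC hα.le (hD2 ρ hρ)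
          (hmain ρ hρ)
    _ = _ := by
        rw [intervalIntegral.integral_add (hpow.add hchain) herr,
          intervalIntegral.integral_add hpow hchain, intervalIntegral.integral_const_mul C]

lemma log_sub_log_le_of_half_le {η C r s : ℝ} {D D' e : ℝ → ℝ} (hη : 0 < η) (hC : 0 ≤ C)
    (hs : s ∈ Ioc 0 r) (hDpos : ∀ ρ ∈ Ioc 0 r, 0 < D ρ) (hmono : MonotoneOn D (Ioc 0 r))
    (hderiv : ∀ᵐ ρ ∂volume.restrict (Ioc 0 r), HasDerivAt D (D' ρ) ρ)
    (hmain : ∀ ρ ∈ Ioc 0 r,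
      1 / 2 * D ρ ≤ C * D ρ ^ (1 + η / 4) + C * ρ * D ρ ^ (η / 4) * D' ρ + e ρ)
    (hD2 : ∀ ρ ∈ Ioc 0 r, D ρ ≤ C * ρ ^ 2) (he : ∀ ρ ∈ Ioc 0 r, 0 ≤ e ρ)
    (heint : IntegrableOn (fun t ↦ e t / (t * D t)) (Ioo 0 r))
    (herr : ∫ t in Ioo 0 r, e t / (t * D t) ≤ C * r ^ (η / 2)) :
    log r - log s ≤
      2 * (C * C ^ (η / 4) * r ^ (η / 2) / (η / 2) + C * D r ^ (η / 4) / (η / 4) +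
        C * r ^ (η / 2)) := by
  obtain ⟨hs0, hsr⟩ := hs
  have hα : 0 < η / 4 := by positivity
  have hIcc : Icc s r ⊆ Ioc 0 r := fun ρ hρ ↦ ⟨hs0.trans_le hρ.1, hρ.2⟩
  have herrI : IntervalIntegrable (fun ρ ↦ e ρ / (ρ * D ρ)) volume s r :=
    (intervalIntegrable_iff_integrableOn_Ioo_of_le hsr).mpr
      (heint.mono_set (Ioo_subset_Ioo_left hs0.le))
  have hpow_le : ∫ ρ in s..r, C * C ^ (η / 4) * ρ ^ (2 * (η / 4) - 1) ≤
      C * C ^ (η / 4) * r ^ (η / 2) / (η / 2) := by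
    rw [intervalIntegral.integral_const_mul, mul_div_assoc, show η / 2 = 2 * (η / 4) by ring]
    gcongr
    exact integral_rpow_sub_one_le hs0.le (by positivity)
  have hchain_le : C * ∫ ρ in s..r, D ρ ^ (η / 4 - 1) * D' ρ ≤ C * D r ^ (η / 4) / (η / 4) := by
    rw [mul_div_assoc]
    gcongr
    refine (integral_rpow_mul_deriv_le hα hsr (fun ρ hρ ↦ hDpos ρ (hIcc hρ)) (hmono.mono hIcc)
      (ae_restrict_of_ae_restrict_of_subset (Ioc_subset_Icc_self.trans hIcc) hderiv)).trans ?_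
    gcongr
    linarith [rpow_nonneg (hDpos s (hIcc (left_mem_Icc.mpr hsr))).le (η / 4)]
  have herr_le : ∫ ρ in s..r, e ρ / (ρ * D ρ) ≤ C * r ^ (η / 2) :=
    (intervalIntegral_le_integral_Ioo hs0.le hsr heint fun ρ hρ ↦ div_nonneg
      (he ρ (Ioo_subset_Ioc_self hρ)) (mul_pos hρ.1 (hDpos ρ (Ioo_subset_Ioc_self hρ))).le).trans
      herr
  have := log_sub_log_le_integral_of_half_le hα hC hs0 hsr (fun ρ hρ ↦ hDpos ρ (hIcc hρ))
    (hmono.mono hIcc)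
    (ae_restrict_of_ae_restrict_of_subset (Ioc_subset_Icc_self.trans hIcc) hderiv)
    (fun ρ hρ ↦ hmain ρ (hIcc hρ)) (fun ρ hρ ↦ hD2 ρ (hIcc hρ)) herrI
  linarith

theorem stmt_10_general (η : ℝ) (hη : 0 < η) (C : ℝ) (hC : 0 < C)
    (r₁ : ℝ) (hr₁ : 0 < r₁) (hr₁1 : r₁ ≤ 1) (D D' e : ℝ → ℝ)
    (hDpos : ∀ r ∈ Set.Ioo (0 : ℝ) 1, 0 < D r)
    (hmono : MonotoneOn D (Set.Ioo (0 : ℝ) 1))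
    (hderiv : ∀ᵐ r ∂(volume.restrict (Set.Ioo (0 : ℝ) 1)), HasDerivAt D (D' r) r)
    (he : ∀ r ∈ Set.Ioo (0 : ℝ) 1, 0 ≤ e r)
    (heint : IntegrableOn (fun t => e t / (t * D t)) (Set.Ioo (0 : ℝ) 1))
    (hmain : ∀ r ∈ Set.Ioo (0 : ℝ) r₁,
      (1 / 2) * D r ≤ C * D r ^ (1 + η / 4) + C * r * D r ^ (η / 4) * D' r + e r)
    (herr : ∀ r ∈ Set.Ioo (0 : ℝ) 1,
      (∫ t in Set.Ioo (0 : ℝ) r, e t / (t * D t)) ≤ C * r ^ (η / 2))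
    (hD2 : ∀ r ∈ Set.Ioo (0 : ℝ) 1, D r ≤ C * r ^ 2) :
    False := by
  have hr : 0 < r₁ / 2 := half_pos hr₁
  have h01 : Ioc 0 (r₁ / 2) ⊆ Ioo 0 1 := fun ρ hρ ↦ ⟨hρ.1, by linarith [hρ.2]⟩
  have h0r₁ : Ioc 0 (r₁ / 2) ⊆ Ioo 0 r₁ := fun ρ hρ ↦ ⟨hρ.1, by linarith [hρ.2]⟩
  refine not_forall_log_sub_log_le hr _ fun s hs ↦ log_sub_log_le_of_half_le hη hC.le hs
    (fun ρ hρ ↦ hDpos ρ (h01 hρ)) (hmono.mono h01) (ae_restrict_of_ae_restrict_of_subset h01 hderiv)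
    (fun ρ hρ ↦ hmain ρ (h0r₁ hρ)) (fun ρ hρ ↦ hD2 ρ (h01 hρ)) (fun ρ hρ ↦ he ρ (h01 hρ))
    (heint.mono_set (Ioo_subset_Ioc_self.trans h01)) (herr _ (h01 ⟨hr, le_rfl⟩))

/-- The contradiction argument in the proof that the limit of the inverse frequency is
positive: an absolutely continuous, nondecreasing, strictly positive `D` on `(0,1)` with
`(1/2) D(r) ≤ C D(r)^{1+η/4} + C r D(r)^{η/4} D'(r) + e(r)` for small `r`,
`∫_0^r e(t)/(t D(t)) dt ≤ C r^{η/2}` and `D(r) ≤ C r²` cannot exist. -/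
theorem stmt_10 (η : ℝ) (hη : 0 < η) (C : ℝ) (hC : 0 < C)
    (r₁ : ℝ) (hr₁ : 0 < r₁) (hr₁1 : r₁ ≤ 1) (D D' e : ℝ → ℝ)
    (hDpos : ∀ r ∈ Set.Ioo (0 : ℝ) 1, 0 < D r)
    (hmono : MonotoneOn D (Set.Ioo (0 : ℝ) 1))
    (hD'int : IntegrableOn D' (Set.Ioo (0 : ℝ) 1))
    (hderiv : ∀ᵐ r ∂(volume.restrict (Set.Ioo (0 : ℝ) 1)), HasDerivAt D (D' r) r)
    (hFTC : ∀ s r : ℝ, 0 < s → s ≤ r → r < 1 → D r - D s = ∫ t in Set.Ioo s r, D' t)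
    (he : ∀ r ∈ Set.Ioo (0 : ℝ) 1, 0 ≤ e r)
    (heint : IntegrableOn (fun t => e t / (t * D t)) (Set.Ioo (0 : ℝ) 1))
    (hmain : ∀ r ∈ Set.Ioo (0 : ℝ) r₁,
      (1 / 2) * D r ≤ C * D r ^ (1 + η / 4) + C * r * D r ^ (η / 4) * D' r + e r)
    (herr : ∀ r ∈ Set.Ioo (0 : ℝ) 1,
      (∫ t in Set.Ioo (0 : ℝ) r, e t / (t * D t)) ≤ C * r ^ (η / 2))
    (hD2 : ∀ r ∈ Set.Ioo (0 : ℝ) 1, D r ≤ C * r ^ 2) :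
    False :=
  stmt_10_general η hη C hC r₁ hr₁ hr₁1 D D' e hDpos hmono hderiv he heint hmain herr hD2
end

section
/- Let I : (0, r₀) → ℝ be continuous with I(r) → I₀ as r → 0 and |I(r) − I₀| ≤ C r^λ for some λ, C > 0 and I₀ > 0. Let H : (0, r₀) → (0, ∞) be absolutely continuous and suppose |(log(H(r)/r^{2I₀+1}))'| ≤ (2/r)|I(r) − I₀| + e(r)/H(r) a.e., where ∫_0^{r₀} e(r)/H(r) dr < ∞ and ∫_0^r e(t)/H(t) dt ≤ C r^λ. Then the limit H₀ := lim_{r→0} H(r)/r^{2I₀+1} exists, is finite and positive, and |H(r)/r^{2I₀+1} − H₀| ≤ C' r^λ for all small r and some constant C'. -/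
/-!
Write `G r = log (H r / r ^ (2 I₀ + 1))`. Since `|I r - I₀| ≤ C r^λ`, the derivative of `G` is
dominated by `2 C r^(λ-1) + e r / H r`, whose integral over `(0, r)` is at most
`(2 C / λ + C) r^λ`. Hence `G` oscillates by `O(r^λ)` on `(0, r)`: it is Cauchy at `0⁺`, has a
limit `G₀`, and `|G r - G₀| = O(r^λ)`. Exponentiating, `H r / r ^ (2 I₀ + 1) → exp G₀ > 0` at the
same rate, because `exp` is Lipschitz near `G₀`.
-/

open MeasureTheory Filter Topology Set Real

theorem integral_Ioo_zero_rpow_sub_one {lam : ℝ} (hlam : 0 < lam) (r : ℝ) (hr : 0 ≤ r) :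
    ∫ t in Ioo 0 r, t ^ (lam - 1) = r ^ lam / lam := by
  rw [← integral_Ioc_eq_integral_Ioo, ← intervalIntegral.integral_of_le hr,
    integral_rpow (Or.inl (by linarith)), sub_add_cancel, zero_rpow hlam.ne', sub_zero]

theorem abs_sub_le_rpow_of_integral_eq {F f a b : ℝ → ℝ} {r₀ lam C s r : ℝ} (hlam : 0 < lam)
    (hFTC : F r - F s = ∫ t in Ioo s r, f t)
    (hf : ∀ᵐ t ∂volume.restrict (Ioo 0 r₀), |f t| ≤ 2 / t * a t + b t)
    (ha : ∀ t ∈ Ioo 0 r₀, a t ≤ C * t ^ lam)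
    (hb : IntegrableOn b (Ioo 0 r₀)) (hbr : ∫ t in Ioo 0 r, b t ≤ C * r ^ lam)
    (hs : 0 < s) (hsr : s ≤ r) (hr : r < r₀) :
    |F r - F s| ≤ (2 * C / lam + C) * r ^ lam := by
  have hsub : Ioo 0 r ⊆ Ioo 0 r₀ := Ioo_subset_Ioo_right hr.le
  have hsub' : Ioo s r ⊆ Ioo 0 r := Ioo_subset_Ioo_left hs.le
  set g : ℝ → ℝ := fun t => 2 * C * t ^ (lam - 1) + b t
  have hpow : IntegrableOn (fun t : ℝ => t ^ (lam - 1)) (Ioo 0 r) :=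
    (intervalIntegral.intervalIntegrable_rpow' (by linarith)).1.mono_set Ioo_subset_Ioc_self
  have hg : IntegrableOn g (Ioo 0 r) := (hpow.const_mul (2 * C)).add (hb.mono_set hsub)
  have hfg : ∀ᵐ t ∂volume.restrict (Ioo 0 r), |f t| ≤ g t := by
    filter_upwards [ae_restrict_of_ae_restrict_of_subset hsub hf,
      ae_restrict_mem measurableSet_Ioo] with t hft ht
    have ht₀ : 0 < t := ht.1
    calc |f t| ≤ 2 / t * a t + b t := hft
      _ ≤ 2 / t * (C * t ^ lam) + b t := by gcongr; exact ha t (hsub ht)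
      _ = g t := by simp only [g, rpow_sub_one ht₀.ne']; field_simp
  calc |F r - F s| = ‖∫ t in Ioo s r, f t‖ := by rw [hFTC, norm_eq_abs]
    _ ≤ ∫ t in Ioo s r, g t :=
      norm_integral_le_of_norm_le (hg.mono_set hsub')
        (ae_restrict_of_ae_restrict_of_subset hsub' hfg)
    -- `|f| ≤ g` forces `g ≥ 0` a.e., so enlarging `(s, r)` to `(0, r)` only increases the integral
    _ ≤ ∫ t in Ioo 0 r, g t :=
      setIntegral_mono_set hg (hfg.mono fun t ht => (abs_nonneg _).trans ht) hsub'.eventuallyLE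
    _ = 2 * C * (r ^ lam / lam) + ∫ t in Ioo 0 r, b t := by
      rw [integral_add (hpow.const_mul _) (hb.mono_set hsub), integral_const_mul,
        integral_Ioo_zero_rpow_sub_one hlam r (hs.le.trans hsr)]
    _ ≤ (2 * C / lam + C) * r ^ lam := by
      rw [add_mul, mul_div_assoc', div_mul_eq_mul_div]
      gcongr

theorem exists_tendsto_nhdsGT_zero_of_dist_le {E : Type*} [PseudoMetricSpace E] [CompleteSpace E]
    {G : ℝ → E} {φ : ℝ → ℝ} {r₀ : ℝ} (hr₀ : 0 < r₀) (hφ : Tendsto φ (𝓝[>] 0) (𝓝 0))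
    (hG : ∀ s r, 0 < s → s ≤ r → r < r₀ → dist (G r) (G s) ≤ φ r) :
    ∃ G₀, Tendsto G (𝓝[>] 0) (𝓝 G₀) ∧ ∀ r ∈ Ioo 0 r₀, dist (G r) G₀ ≤ φ r := by
  have hcauchy : Cauchy (map G (𝓝[>] 0)) := by
    refine Metric.cauchy_iff.2 ⟨map_neBot, fun ε hε => ?_⟩
    obtain ⟨δ, hδ, hδsub⟩ := mem_nhdsGT_iff_exists_Ioo_subset.1
      ((hφ.eventually (gt_mem_nhds hε)).and (Ioo_mem_nhdsGT hr₀))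
    have hclose : ∀ a ∈ Ioo 0 δ, ∀ b ∈ Ioo 0 δ, a ≤ b → dist (G a) (G b) < ε := fun a ha b hb hab =>
      (dist_comm (G a) _ ▸ hG a b ha.1 hab (hδsub hb).2.2).trans_lt (hδsub hb).1
    refine ⟨G '' Ioo 0 δ, image_mem_map (Ioo_mem_nhdsGT hδ), ?_⟩
    rintro _ ⟨a, ha, rfl⟩ _ ⟨b, hb, rfl⟩
    rcases le_total a b with hab | hba
    · exact hclose a ha b hb hab
    · exact dist_comm (G a) _ ▸ hclose b hb a ha hba
  obtain ⟨G₀, hG₀⟩ := cauchy_map_iff_exists_tendsto.1 hcauchy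
  refine ⟨G₀, hG₀, fun r hr => le_of_tendsto (tendsto_const_nhds.dist hG₀) ?_⟩
  filter_upwards [Ioo_mem_nhdsGT hr.1] with s hs using hG s r hs.1 hs.2.le hr.2

theorem tendsto_const_mul_rpow_nhdsGT_zero (K : ℝ) {lam : ℝ} (hlam : 0 < lam) :
    Tendsto (fun r : ℝ => K * r ^ lam) (𝓝[>] 0) (𝓝 0) := by
  simpa [zero_rpow hlam.ne'] using
    ((continuousAt_rpow_const 0 lam (Or.inr hlam.le)).tendsto.const_mul K).mono_left
      nhdsWithin_le_nhds

theorem abs_exp_sub_exp_le {a b : ℝ} (h : |a - b| ≤ 1) : |exp a - exp b| ≤ 2 * exp b * |a - b| := by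
  calc |exp a - exp b| = exp b * |exp (a - b) - 1| := by
        rw [← abs_of_pos (exp_pos b), ← abs_mul, mul_sub, ← exp_add, add_sub_cancel, mul_one,
          abs_of_pos (exp_pos b)]
    _ ≤ exp b * (2 * |a - b|) := by gcongr; exact abs_exp_sub_one_le h
    _ = 2 * exp b * |a - b| := by ring

theorem exists_abs_sub_exp_le_rpow {P : ℝ → ℝ} {G₀ K lam r₀ : ℝ} (hr₀ : 0 < r₀) (hlam : 0 < lam)
    (hK : 0 < K) (hP : ∀ r ∈ Ioo 0 r₀, 0 < P r)
    (hlog : ∀ r ∈ Ioo 0 r₀, |log (P r) - G₀| ≤ K * r ^ lam) :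
    ∃ C' : ℝ, 0 < C' ∧ ∃ r₁ > (0 : ℝ), ∀ r ∈ Ioo 0 r₁, |P r - exp G₀| ≤ C' * r ^ lam := by
  have hsmall := tendsto_const_mul_rpow_nhdsGT_zero K hlam
  obtain ⟨r₁, hr₁, hr₁sub⟩ := mem_nhdsGT_iff_exists_Ioo_subset.1
    ((hsmall.eventually (ge_mem_nhds one_pos)).and (Ioo_mem_nhdsGT hr₀))
  refine ⟨2 * exp G₀ * K, by positivity, r₁, hr₁, fun r hr => ?_⟩
  obtain ⟨hKr, hr'⟩ := hr₁sub hr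
  have hGr := hlog r hr'
  calc |P r - exp G₀| = |exp (log (P r)) - exp G₀| := by rw [exp_log (hP r hr')]
    _ ≤ 2 * exp G₀ * |log (P r) - G₀| := abs_exp_sub_exp_le (hGr.trans hKr)
    _ ≤ 2 * exp G₀ * (K * r ^ lam) := by gcongr
    _ = 2 * exp G₀ * K * r ^ lam := by ring

theorem stmt_11_general (r₀ I₀ lam C : ℝ) (hr₀ : 0 < r₀) (hlam : 0 < lam)
    (hC : 0 < C) (I H e L' : ℝ → ℝ)
    (hIdecay : ∀ r ∈ Set.Ioo 0 r₀, |I r - I₀| ≤ C * r ^ lam)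
    (hHpos : ∀ r ∈ Set.Ioo 0 r₀, 0 < H r)
    (hFTC : ∀ s r : ℝ, 0 < s → s ≤ r → r < r₀ →
      Real.log (H r / r ^ (2 * I₀ + 1)) - Real.log (H s / s ^ (2 * I₀ + 1)) =
        ∫ t in Set.Ioo s r, L' t)
    (hL'bound : ∀ᵐ r ∂(volume.restrict (Set.Ioo 0 r₀)),
      |L' r| ≤ 2 / r * |I r - I₀| + e r / H r)
    (heHint : IntegrableOn (fun r => e r / H r) (Set.Ioo 0 r₀))
    (heH : ∀ r ∈ Set.Ioo 0 r₀, (∫ t in Set.Ioo (0 : ℝ) r, e t / H t) ≤ C * r ^ lam) :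
    ∃ H₀ : ℝ, 0 < H₀ ∧
      Filter.Tendsto (fun r => H r / r ^ (2 * I₀ + 1)) (nhdsWithin 0 (Set.Ioi 0)) (nhds H₀) ∧
      ∃ C' : ℝ, 0 < C' ∧ ∃ r₁ > (0 : ℝ), ∀ r ∈ Set.Ioo (0 : ℝ) r₁,
        |H r / r ^ (2 * I₀ + 1) - H₀| ≤ C' * r ^ lam := by
  set P : ℝ → ℝ := fun r => H r / r ^ (2 * I₀ + 1)
  have hP : ∀ r ∈ Ioo 0 r₀, 0 < P r := fun r hr => div_pos (hHpos r hr) (rpow_pos_of_pos hr.1 _)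
  set K := 2 * C / lam + C
  have hK : 0 < K := by positivity
  have hosc : ∀ s r, 0 < s → s ≤ r → r < r₀ → dist (log (P r)) (log (P s)) ≤ K * r ^ lam :=
    fun s r hs hsr hr => (dist_eq _ _).trans_le <|
      abs_sub_le_rpow_of_integral_eq (F := fun r => log (P r)) (a := fun t => |I t - I₀|) hlam
        (hFTC s r hs hsr hr) hL'bound hIdecay heHint (heH r ⟨hs.trans_le hsr, hr⟩) hs hsr hr
  obtain ⟨G₀, hG₀, hlog⟩ :=
    exists_tendsto_nhdsGT_zero_of_dist_le hr₀ (tendsto_const_mul_rpow_nhdsGT_zero K hlam) hosc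
  refine ⟨exp G₀, exp_pos G₀, ?_, exists_abs_sub_exp_le_rpow hr₀ hlam hK hP
    fun r hr => (dist_eq _ _).symm.trans_le (hlog r hr)⟩
  refine ((continuous_exp.tendsto G₀).comp hG₀).congr' ?_
  filter_upwards [Ioo_mem_nhdsGT hr₀] with r hr using exp_log (hP r hr)

/-- Decay of the height: if the frequency `I(r) → I₀ > 0` with rate `r^lam` and
`log(H(r)/r^{2I₀+1})` is absolutely continuous with
`|(log(H(r)/r^{2I₀+1}))'| ≤ (2/r)|I(r)-I₀| + e(r)/H(r)` a.e., where
`∫_0^r e/H ≤ C r^lam`, then `H₀ := lim_{r→0} H(r)/r^{2I₀+1}` exists, is positive,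
and `|H(r)/r^{2I₀+1} - H₀| ≤ C' r^lam` for small `r`. -/
theorem stmt_11 (r₀ I₀ lam C : ℝ) (hr₀ : 0 < r₀) (hI₀ : 0 < I₀) (hlam : 0 < lam)
    (hC : 0 < C) (I H e L' : ℝ → ℝ)
    (hIcont : ContinuousOn I (Set.Ioo 0 r₀))
    (hIlim : Filter.Tendsto I (nhdsWithin 0 (Set.Ioi 0)) (nhds I₀))
    (hIdecay : ∀ r ∈ Set.Ioo 0 r₀, |I r - I₀| ≤ C * r ^ lam)
    (hHpos : ∀ r ∈ Set.Ioo 0 r₀, 0 < H r)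
    (henn : ∀ r ∈ Set.Ioo 0 r₀, 0 ≤ e r)
    (hL'int : IntegrableOn L' (Set.Ioo 0 r₀))
    (hderiv : ∀ᵐ r ∂(volume.restrict (Set.Ioo 0 r₀)),
      HasDerivAt (fun s => Real.log (H s / s ^ (2 * I₀ + 1))) (L' r) r)
    (hFTC : ∀ s r : ℝ, 0 < s → s ≤ r → r < r₀ →
      Real.log (H r / r ^ (2 * I₀ + 1)) - Real.log (H s / s ^ (2 * I₀ + 1)) =
        ∫ t in Set.Ioo s r, L' t)
    (hL'bound : ∀ᵐ r ∂(volume.restrict (Set.Ioo 0 r₀)),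
      |L' r| ≤ 2 / r * |I r - I₀| + e r / H r)
    (heHint : IntegrableOn (fun r => e r / H r) (Set.Ioo 0 r₀))
    (heH : ∀ r ∈ Set.Ioo 0 r₀, (∫ t in Set.Ioo (0 : ℝ) r, e t / H t) ≤ C * r ^ lam) :
    ∃ H₀ : ℝ, 0 < H₀ ∧
      Filter.Tendsto (fun r => H r / r ^ (2 * I₀ + 1)) (nhdsWithin 0 (Set.Ioi 0)) (nhds H₀) ∧
      ∃ C' : ℝ, 0 < C' ∧ ∃ r₁ > (0 : ℝ), ∀ r ∈ Set.Ioo (0 : ℝ) r₁,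
        |H r / r ^ (2 * I₀ + 1) - H₀| ≤ C' * r ^ lam :=
  stmt_11_general r₀ I₀ lam C hr₀ hlam hC I H e L' hIdecay hHpos hFTC hL'bound heHint heH
end
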